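/- Let G be a connected finite simple graph of order n ≥ 2, let uv be an edge of G, and let U = {tu : t ∈ N(u)} ∪ ({sv : s ∈ N(v)} \ {rv : r ∈ N(u) ∩ N(v)}), i.e., U consists of all edges incident to u together with all edges incident to v except those joining v to a common neighbor of u and v. Then γ_dR(G − U) > γ_dR(G). -/

import Mathlib

/-- A double Roman dominating function (DRDF) on a graph `G`: a function
`f : V → ℕ` taking values in `{0,1,2,3}` such that every vertex assigned `0`
has a neighbor assigned `3` or two distinct neighbors assigned `2`, and every
vertex assigned `1` has a neighbor assigned at least `2`. -/
def IsDRDF {V : Type*} (G : SimpleGraph V) (f : V → ℕ) : Prop :=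
  (∀ v, f v ≤ 3) ∧
  (∀ v, f v = 0 →
    (∃ w, G.Adj v w ∧ f w = 3) ∨
    (∃ w₁ w₂, G.Adj v w₁ ∧ G.Adj v w₂ ∧ w₁ ≠ w₂ ∧ f w₁ = 2 ∧ f w₂ = 2)) ∧
  (∀ v, f v = 1 → ∃ w, G.Adj v w ∧ 2 ≤ f w)

/-- The double Roman domination number `γ_dR(G)`: the minimum weight of a DRDF on `G`. -/
noncomputable def gammaDR {V : Type*} [Fintype V] (G : SimpleGraph V) : ℕ :=
  sInf {k | ∃ f : V → ℕ, IsDRDF G f ∧ ∑ v, f v = k}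

/-- The double Roman bondage number `b_dR(G)`: the minimum cardinality of a set
`B` of edges of `G` such that `γ_dR(G - B) > γ_dR(G)`. -/
noncomputable def bDR {V : Type*} [Fintype V] (G : SimpleGraph V) : ℕ :=
  sInf {k | ∃ B : Finset (Sym2 V), ↑B ⊆ G.edgeSet ∧ B.card = k ∧
    gammaDR G < gammaDR (G.deleteEdges ↑B)}

/-!
Deleting `U` isolates `u`, so every DRDF `f` of `G − U` has `f u ≥ 2`, while every remaining
neighbor of `v` is a neighbor of `u` in `G`. Lowering the value at `u` to `min (f v) 1` therefore
gives a DRDF of `G` of smaller weight: if `f v = 0`, then `u` is dominated by the witnesses of `v`;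
otherwise `v` itself or the witness of `v` serves `u`.
-/

section DoubleRoman

variable {V : Type*}

def DRZeroCond (G : SimpleGraph V) (f : V → ℕ) (x : V) : Prop :=
  (∃ w, G.Adj x w ∧ f w = 3) ∨
    (∃ w₁ w₂, G.Adj x w₁ ∧ G.Adj x w₂ ∧ w₁ ≠ w₂ ∧ f w₁ = 2 ∧ f w₂ = 2)

def DROneCond (G : SimpleGraph V) (f : V → ℕ) (x : V) : Prop :=
  ∃ w, G.Adj x w ∧ 2 ≤ f w

theorem isDRDF_iff {G : SimpleGraph V} {f : V → ℕ} :
    IsDRDF G f ↔ (∀ x, f x ≤ 3) ∧ (∀ x, f x = 0 → DRZeroCond G f x) ∧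
      (∀ x, f x = 1 → DROneCond G f x) :=
  Iff.rfl

variable {G G' : SimpleGraph V} {f g : V → ℕ} {x y : V}

theorem DRZeroCond.transfer (h : ∀ w, G'.Adj x w → G.Adj y w ∧ g w = f w)
    (hx : DRZeroCond G' f x) : DRZeroCond G g y := by
  rcases hx with ⟨w, hw, hw3⟩ | ⟨w₁, w₂, hw₁, hw₂, hne, hw₁2, hw₂2⟩
  · exact Or.inl ⟨w, (h w hw).1, (h w hw).2.trans hw3⟩
  · exact Or.inr ⟨w₁, w₂, (h w₁ hw₁).1, (h w₂ hw₂).1, hne,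
      (h w₁ hw₁).2.trans hw₁2, (h w₂ hw₂).2.trans hw₂2⟩

theorem DROneCond.transfer (h : ∀ w, G'.Adj x w → G.Adj y w ∧ g w = f w)
    (hx : DROneCond G' f x) : DROneCond G g y := by
  obtain ⟨w, hw, hw2⟩ := hx
  exact ⟨w, (h w hw).1, (h w hw).2 ▸ hw2⟩

theorem IsDRDF.two_le_of_forall_not_adj (hf : IsDRDF G f) (hx : ∀ w, ¬G.Adj x w) :
    2 ≤ f x := by
  obtain ⟨-, hzero, hone⟩ := hf
  by_contra! hlt
  interval_cases hfx : f x
  · rcases hzero x hfx with ⟨w, hw, -⟩ | ⟨w, -, hw, -⟩ <;> exact hx w hw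
  · obtain ⟨w, hw, -⟩ := hone x hfx
    exact hx w hw

theorem IsDRDF.update_of_forall_not_adj [DecidableEq V] (hle : G' ≤ G) {u v : V}
    (huv : G.Adj u v) (hu : ∀ w, ¬G'.Adj u w) (hv : ∀ w, G'.Adj v w → G.Adj u w)
    (hf : IsDRDF G' f) : IsDRDF G (Function.update f u (min (f v) 1)) := by
  set g := Function.update f u (min (f v) 1)
  obtain ⟨hle3, hzero, hone⟩ := isDRDF_iff.mp hf
  have hgu : g u = min (f v) 1 := Function.update_self ..
  have hgne : ∀ x ≠ u, g x = f x := fun x hxu => Function.update_of_ne hxu ..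
  have hkeep : ∀ z w, G'.Adj z w → g w = f w := fun z w hzw =>
    hgne w fun hwu => hu z (by rw [← hwu]; exact hzw.symm)
  have hfrom : ∀ z w, G'.Adj z w → G.Adj z w ∧ g w = f w :=
    fun z w hzw => ⟨hle hzw, hkeep z w hzw⟩
  have hfromv : ∀ w, G'.Adj v w → G.Adj u w ∧ g w = f w :=
    fun w hvw => ⟨hv w hvw, hkeep v w hvw⟩
  refine isDRDF_iff.mpr ⟨fun x => ?_, fun x hx => ?_, fun x hx => ?_⟩
  all_goals rcases eq_or_ne x u with rfl | hxu
  · rw [hgu]; omega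
  · rw [hgne x hxu]; exact hle3 x
  · rw [hgu, Nat.min_eq_zero_iff] at hx
    exact (hzero v (hx.resolve_right one_ne_zero)).transfer hfromv
  · rw [hgne x hxu] at hx
    exact (hzero x hx).transfer (hfrom x)
  · rw [hgu] at hx
    rcases Nat.lt_or_ge (f v) 2 with hv2 | hv2
    · exact (hone v (by omega)).transfer hfromv
    · exact ⟨v, huv, by rwa [hgne v huv.ne.symm]⟩
  · rw [hgne x hxu] at hx
    exact (hone x hx).transfer (hfrom x)

variable [Fintype V]

theorem gammaDR_le (hf : IsDRDF G f) : gammaDR G ≤ ∑ x, f x :=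
  Nat.sInf_le ⟨f, hf, rfl⟩

theorem exists_isDRDF_sum_eq_gammaDR (G : SimpleGraph V) :
    ∃ f, IsDRDF G f ∧ ∑ x, f x = gammaDR G :=
  Nat.sInf_mem (s := {k | ∃ f : V → ℕ, IsDRDF G f ∧ ∑ v, f v = k})
    ⟨_, fun _ => 3, ⟨fun _ => le_rfl, fun _ h => by simp at h, fun _ h => by simp at h⟩, rfl⟩

theorem gammaDR_lt_of_forall_not_adj (hle : G' ≤ G) {u v : V} (huv : G.Adj u v)
    (hu : ∀ w, ¬G'.Adj u w) (hv : ∀ w, G'.Adj v w → G.Adj u w) :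
    gammaDR G < gammaDR G' := by
  classical
  obtain ⟨f, hf, hsum⟩ := exists_isDRDF_sum_eq_gammaDR G'
  have hfu : min (f v) 1 < f u := by
    have := hf.two_le_of_forall_not_adj hu
    omega
  calc gammaDR G ≤ ∑ x, Function.update f u (min (f v) 1) x :=
        gammaDR_le (hf.update_of_forall_not_adj hle huv hu hv)
    _ < ∑ x, f x := by
        refine Finset.sum_lt_sum (fun x _ => ?_) ⟨u, Finset.mem_univ u, by simpa using hfu⟩
        rcases eq_or_ne x u with rfl | hxu
        · simpa using hfu.le
        · simp [Function.update_of_ne hxu]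
    _ = gammaDR G' := hsum

end DoubleRoman

theorem gammaDR_deleteEdges_gt_general {V : Type*} [Fintype V]
    (G : SimpleGraph V)
    (u v : V) (huv : G.Adj u v) :
    gammaDR G < gammaDR (G.deleteEdges
      ({e | ∃ t, G.Adj u t ∧ e = s(t, u)} ∪
        ({e | ∃ s', G.Adj v s' ∧ e = s(s', v)} \
          {e | ∃ r, G.Adj u r ∧ G.Adj v r ∧ e = s(r, v)}))) := by
  refine gammaDR_lt_of_forall_not_adj (G.deleteEdges_le _) huv ?_ ?_
  · intro w huw
    obtain ⟨huw, hdel⟩ := G.deleteEdges_adj.mp huw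
    exact hdel (Or.inl ⟨w, huw, Sym2.eq_swap⟩)
  · intro w hvw
    obtain ⟨hvw, hdel⟩ := G.deleteEdges_adj.mp hvw
    have hcommon : s(v, w) ∈ {e | ∃ r, G.Adj u r ∧ G.Adj v r ∧ e = s(r, v)} :=
      not_not.mp fun hC => hdel (Or.inr ⟨⟨w, hvw, Sym2.eq_swap⟩, hC⟩)
    obtain ⟨r, hur, -, hrv⟩ := hcommon
    rcases Sym2.eq_iff.mp hrv with ⟨-, rfl⟩ | ⟨-, rfl⟩
    · exact absurd rfl hvw.ne
    · exact hur

/-- If `G` is a connected graph of order `n ≥ 2`, `uv ∈ E(G)`, and `U` consists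
of all edges incident to `u` together with all edges incident to `v` except
those joining `v` to a common neighbor of `u` and `v`, then
`γ_dR(G − U) > γ_dR(G)`. -/
theorem gammaDR_deleteEdges_gt {V : Type*} [Fintype V]
    (G : SimpleGraph V) (hconn : G.Connected) (hn : 2 ≤ Fintype.card V)
    (u v : V) (huv : G.Adj u v) :
    gammaDR G < gammaDR (G.deleteEdges
      ({e | ∃ t, G.Adj u t ∧ e = s(t, u)} ∪
        ({e | ∃ s', G.Adj v s' ∧ e = s(s', v)} \
          {e | ∃ r, G.Adj u r ∧ G.Adj v r ∧ e = s(r, v)}))) :=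
  gammaDR_deleteEdges_gt_general G u v huv
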